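/- For any collection of verification operators Ω_j with largest eigenvalue 1, second largest eigenvalue β_j = ‖Ω_j − U(ρ_j)‖, spectral gaps ν_j = 1 − β_j, and with ν_M = min_j ν_j, β_M = max_j β_j, the process verification operator Θ = d Σ_j p_j U†(Ω_j) ⊗ ρ_j* satisfies Θ ≤ d Σ_j p_j (ν_j ρ_j + β_j) ⊗ ρ_j*, and hence Θ ≤ ν_M Θ_P + β_M (1 ⊗ Σ_j d p_j ρ_j*), where Θ_P = d Σ_j p_j ρ_j ⊗ ρ_j*. -/

import Mathlib

set_option linter.unusedSectionVars false
set_option maxHeartbeats 1000000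
open scoped Matrix Kronecker ComplexOrder Matrix.Norms.L2Operator

/-- The rank-one projector `|ψ⟩⟨ψ|` of a vector `ψ`. -/
noncomputable def proj {d : ℕ} (ψ : Fin d → ℂ) : Matrix (Fin d) (Fin d) ℂ :=
  Matrix.vecMulVec ψ (star ψ)

section Aux
variable {m n : Type*} [Fintype m] [Fintype n] [DecidableEq m] [DecidableEq n]

lemma kron_conjT (A : Matrix m m ℂ) (B : Matrix n n ℂ) :
    (A ⊗ₖ B)ᴴ = Aᴴ ⊗ₖ Bᴴ := by
  ext ⟨i, j⟩ ⟨k, l⟩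
  simp [Matrix.conjTranspose_apply, Matrix.kroneckerMap_apply, star_mul']

lemma psd_kron {A : Matrix m m ℂ} {B : Matrix n n ℂ}
    (hA : A.PosSemidef) (hB : B.PosSemidef) : (A ⊗ₖ B).PosSemidef := by
  exact hA.kronecker hB

lemma psd_smul {c : ℂ} (hc : 0 ≤ c) {M : Matrix n n ℂ} (hM : M.PosSemidef) :
    (c • M).PosSemidef := by
  exact hM.smul hc

lemma psd_sum {ι : Type*} [Fintype ι] (f : ι → Matrix n n ℂ)
    (h : ∀ j, (f j).PosSemidef) : (∑ j, f j).PosSemidef :=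
  Finset.sum_induction f _ (fun _ _ ha hb => ha.add hb) Matrix.PosSemidef.zero
    (fun i _ => h i)

lemma sub_kron (A B : Matrix m m ℂ) (C : Matrix n n ℂ) :
    (A - B) ⊗ₖ C = A ⊗ₖ C - B ⊗ₖ C := by
  ext ⟨i, j⟩ ⟨k, l⟩
  simp [Matrix.kroneckerMap_apply, sub_mul]

end Aux

lemma proj_psd {d : ℕ} (v : Fin d → ℂ) : (proj v).PosSemidef := by
  have h : proj v = (Matrix.replicateRow Unit (star v))ᴴ * (Matrix.replicateRow Unit (star v)) := by
    ext i j
    simp [proj, Matrix.mul_apply, Matrix.vecMulVec_apply, Matrix.conjTranspose_apply,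
      Matrix.replicateRow_apply, mul_comm]
  rw [h]
  exact Matrix.posSemidef_conjTranspose_mul_self _

lemma proj_map_psd {d : ℕ} (v : Fin d → ℂ) :
    ((proj v).map (starRingEnd ℂ)).PosSemidef := by
  have h : (proj v).map (starRingEnd ℂ) = proj (star v) := by
    ext i j
    simp [proj, Matrix.map_apply, Matrix.vecMulVec_apply, mul_comm]
  rw [h]
  exact proj_psd _
/-- with `β_j = ‖Ω_j − 𝒰(ρ_j)‖` the second largest eigenvalue of `Ω_j`,
`ν_j = 1 − β_j`, `ν_M = min_j ν_j`, `β_M = max_j β_j`, the process verification operator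
`Θ = d ∑ⱼ p_j 𝒰†(Ω_j) ⊗ ρ_j*` satisfies `Θ ≤ d ∑ⱼ p_j (ν_j ρ_j + β_j) ⊗ ρ_j*` and hence
`Θ ≤ ν_M Θ_P + β_M (1 ⊗ ∑ⱼ d p_j ρ_j*)`, where `Θ_P = d ∑ⱼ p_j ρ_j ⊗ ρ_j*`. -/
theorem stmt_5 (d : ℕ) (hd : 0 < d) {ι : Type} [Fintype ι] [Nonempty ι]
    (p : ι → ℝ) (hp : ∀ j, 0 ≤ p j) (hpsum : ∑ j, p j = 1)
    (ψ : ι → Fin d → ℂ) (hψ : ∀ j, star (ψ j) ⬝ᵥ ψ j = 1)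
    (U : Matrix (Fin d) (Fin d) ℂ) (hU : U ∈ Matrix.unitaryGroup (Fin d) ℂ)
    (Ω : ι → Matrix (Fin d) (Fin d) ℂ)
    (hΩlow : ∀ j, (Ω j - U * proj (ψ j) * Uᴴ).PosSemidef)
    (hΩle : ∀ j, ((1 : Matrix (Fin d) (Fin d) ℂ) - Ω j).PosSemidef)
    (β ν : ι → ℝ)
    (hβ : ∀ j, β j = ‖Ω j - U * proj (ψ j) * Uᴴ‖)
    (hν : ∀ j, ν j = 1 - β j)
    (hΩup : ∀ j, (((ν j : ℂ) • (U * proj (ψ j) * Uᴴ) + (β j : ℂ) • 1) - Ω j).PosSemidef)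
    (νM βM : ℝ)
    (hνM : νM = Finset.univ.inf' Finset.univ_nonempty ν)
    (hβM : βM = Finset.univ.sup' Finset.univ_nonempty β)
    (Θ ΘP : Matrix ((Fin d) × (Fin d)) ((Fin d) × (Fin d)) ℂ)
    (hΘ : Θ = (d : ℂ) • ∑ j, (p j : ℂ) •
      ((Uᴴ * Ω j * U) ⊗ₖ (proj (ψ j)).map (starRingEnd ℂ)))
    (hΘP : ΘP = (d : ℂ) • ∑ j, (p j : ℂ) •
      (proj (ψ j) ⊗ₖ (proj (ψ j)).map (starRingEnd ℂ))) :
    (((d : ℂ) • ∑ j, (p j : ℂ) •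
        (((ν j : ℂ) • proj (ψ j) + (β j : ℂ) • 1) ⊗ₖ (proj (ψ j)).map (starRingEnd ℂ)))
      - Θ).PosSemidef ∧
    (((νM : ℂ) • ΘP + (βM : ℂ) •
        ((1 : Matrix (Fin d) (Fin d) ℂ) ⊗ₖ
          ((d : ℂ) • ∑ j, (p j : ℂ) • (proj (ψ j)).map (starRingEnd ℂ))))
      - Θ).PosSemidef := by
  have h1 : Uᴴ * U = 1 := by
    simpa [Matrix.star_eq_conjTranspose] using hU.1
  have h1' : ∀ X : Matrix (Fin d) (Fin d) ℂ, Uᴴ * (U * X) = X := fun X => by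
    rw [← Matrix.mul_assoc, h1, Matrix.one_mul]
  have hdpos : (0:ℂ) ≤ (d:ℂ) := by exact_mod_cast Nat.zero_le d
  have hppos : ∀ j, (0:ℂ) ≤ (p j : ℂ) := fun j => by exact_mod_cast hp j
  have hK : ∀ j, ((proj (ψ j)).map (starRingEnd ℂ)).PosSemidef := fun j => proj_map_psd _
  -- X j is PSD
  have hX : ∀ j, ((ν j : ℂ) • proj (ψ j) + (β j : ℂ) • 1 - Uᴴ * Ω j * U).PosSemidef := by
    intro j
    have h := (hΩup j).conjTranspose_mul_mul_same U
    have e : Uᴴ * (((ν j : ℂ) • (U * proj (ψ j) * Uᴴ) + (β j : ℂ) • 1) - Ω j) * U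
        = (ν j : ℂ) • proj (ψ j) + (β j : ℂ) • 1 - Uᴴ * Ω j * U := by
      simp only [Matrix.mul_sub, Matrix.sub_mul, Matrix.mul_add, Matrix.add_mul,
        Matrix.mul_smul, Matrix.smul_mul, Matrix.mul_one, Matrix.one_mul,
        Matrix.mul_assoc, h1, h1']
    rwa [e] at h
  -- 1 - proj ψ j is PSD
  have hQ : ∀ j, ((1 : Matrix (Fin d) (Fin d) ℂ) - proj (ψ j)).PosSemidef := by
    intro j
    have h := (hΩle j).add (hΩlow j)
    rw [sub_add_sub_cancel] at h
    have h2 := h.conjTranspose_mul_mul_same U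
    have e : Uᴴ * ((1 : Matrix (Fin d) (Fin d) ℂ) - U * proj (ψ j) * Uᴴ) * U
        = 1 - proj (ψ j) := by
      simp only [Matrix.mul_sub, Matrix.sub_mul, Matrix.mul_one, Matrix.one_mul,
        Matrix.mul_assoc, h1, h1']
    rwa [e] at h2
  -- νM + βM = 1 and bounds
  have hνMle : ∀ j, νM ≤ ν j := fun j => hνM ▸ Finset.inf'_le _ (Finset.mem_univ j)
  have hsum1 : νM + βM = 1 := by
    obtain ⟨j0, -, hj0⟩ := Finset.exists_mem_eq_sup' Finset.univ_nonempty β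
    have hle : νM ≤ 1 - βM := by
      have h := hνMle j0
      rw [hν j0] at h
      rw [hβM, hj0]
      exact h
    have hge : 1 - βM ≤ νM := by
      rw [hνM]
      apply Finset.le_inf'
      intro j _
      have : β j ≤ βM := hβM ▸ Finset.le_sup' β (Finset.mem_univ j)
      rw [hν j]; linarith
    linarith
  constructor
  · -- Part 1
    rw [hΘ, ← smul_sub, ← Finset.sum_sub_distrib]
    simp only [← smul_sub, ← sub_kron]
    exact psd_smul hdpos (psd_sum _ fun j => psd_smul (hppos j) (psd_kron (hX j) (hK j)))
  · -- Part 2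
    have e2 : ((νM : ℂ) • ΘP + (βM : ℂ) •
        ((1 : Matrix (Fin d) (Fin d) ℂ) ⊗ₖ
          ((d : ℂ) • ∑ j, (p j : ℂ) • (proj (ψ j)).map (starRingEnd ℂ)))) - Θ
        = (d : ℂ) • ∑ j, (p j : ℂ) •
          ((((νM : ℂ) • proj (ψ j) + (βM : ℂ) • 1) - Uᴴ * Ω j * U) ⊗ₖ
            (proj (ψ j)).map (starRingEnd ℂ)) := by
      subst hΘ hΘP
      ext ⟨i, k⟩ ⟨j, l⟩
      simp only [Matrix.add_apply, Matrix.sub_apply, Matrix.smul_apply, Matrix.sum_apply,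
        Matrix.kroneckerMap_apply, smul_eq_mul, Finset.mul_sum, ← Finset.sum_add_distrib,
        ← Finset.sum_sub_distrib]
      apply Finset.sum_congr rfl
      intro t _
      ring
    rw [e2]
    refine psd_smul hdpos (psd_sum _ fun j => psd_smul (hppos j) (psd_kron ?_ (hK j)))
    -- (νM • P + βM • 1 - UᴴΩU) is PSD
    have hc : (0:ℂ) ≤ ((ν j - νM : ℝ) : ℂ) := by
      have := hνMle j
      exact_mod_cast sub_nonneg.2 this
    have r2 : (βM : ℂ) = (β j : ℂ) + ((ν j - νM : ℝ) : ℂ) := by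
      have : βM = β j + (ν j - νM) := by
        have := hν j; linarith
      exact_mod_cast this
    have e3 : (νM : ℂ) • proj (ψ j) + (βM : ℂ) • 1 - Uᴴ * Ω j * U
        = ((ν j : ℂ) • proj (ψ j) + (β j : ℂ) • 1 - Uᴴ * Ω j * U)
          + ((ν j - νM : ℝ) : ℂ) • ((1 : Matrix (Fin d) (Fin d) ℂ) - proj (ψ j)) := by
      have r1 : (νM : ℂ) = (ν j : ℂ) - ((ν j - νM : ℝ) : ℂ) := by push_cast; ring
      rw [r1, r2]
      ext a b
      simp only [Matrix.add_apply, Matrix.sub_apply, Matrix.smul_apply, smul_eq_mul]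
      ring
    rw [e3]
    exact (hX j).add (psd_smul hc (hQ j))
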